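/- Let μ, σ, λ ∈ ℂ, let w ∈ ℂ with w² = λ such that 1−2iw is not a nonpositive integer, and set a = −(σ−μ)/4 + iw, b = −(σ−μ)/4 − iw, c = μ/2. Define η₂(x) = sinh(x/2)^{(μ−1)/2}·cosh(x/2)^{−(σ−1)/2}·sinh(x/2)^{−2b}·₂F₁(b, b−c+1; b−a+1; −sinh(x/2)⁻²) for x > 2·arsinh(1). Then lim_{x→∞} e^{−iwx}·η₂(x) = 2^{−2iw}. -/

import Mathlib

/-!
Write `s = sinh (x/2)` and `k = cosh (x/2)`. The value of `b` makes the exponents of `s` and `k`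
in `η₂` add up to `2iw`, which absorbs `e^{-iwx}`:
`e^{-iwx} η₂(x) = (e^{-x/2} s)^{(σ-1)/2 + 2iw} (e^{-x/2} k)^{-(σ-1)/2} ₂F₁(…; -s⁻²)`.
Both bases tend to `1/2`, and the argument of `₂F₁` tends to `0`, where the series is analytic
(its radius of convergence is `1`, or `∞` when it terminates) with value `1`.
The limit is therefore `(1/2)^{2iw} = 2^{-2iw}`.
-/

noncomputable section

/-- The Gauss hypergeometric series `₂F₁(a,b;c;z) = Σ_k (a)_k (b)_k / (k! (c)_k) z^k`. -/
def hyp (a b c z : ℂ) : ℂ :=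
  ∑' k : ℕ, (ascPochhammer ℂ k).eval a * (ascPochhammer ℂ k).eval b /
      ((k.factorial : ℂ) * (ascPochhammer ℂ k).eval c) * z ^ k

/-- `η₂(x) = sinh(x/2)^{(μ−1)/2} cosh(x/2)^{−(σ−1)/2} sinh(x/2)^{−2b}
  ₂F₁(b,b−c+1;b−a+1;−sinh(x/2)⁻²)`. -/
def eta2 (a b c μ σ : ℂ) (x : ℝ) : ℂ :=
  ((Real.sinh (x / 2) : ℝ) : ℂ) ^ ((μ - 1) / 2) *
    ((Real.cosh (x / 2) : ℝ) : ℂ) ^ (-((σ - 1) / 2)) *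
    ((Real.sinh (x / 2) : ℝ) : ℂ) ^ (-(2 * b)) *
    hyp b (b - c + 1) (b - a + 1) (-(((Real.sinh (x / 2))⁻¹ ^ 2 : ℝ) : ℂ))

open Filter Topology Real

theorem ordinaryHypergeometricSeries_radius_pos {𝕂 : Type*} (𝔸 : Type*) [RCLike 𝕂]
    [NormedDivisionRing 𝔸] [NormedAlgebra 𝕂 𝔸] (a b c : 𝕂) :
    0 < (ordinaryHypergeometricSeries 𝔸 a b c).radius := by
  by_cases h : ∀ k : ℕ, (k : 𝕂) ≠ -a ∧ (k : 𝕂) ≠ -b ∧ (k : 𝕂) ≠ -c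
  · simp [ordinaryHypergeometricSeries_radius_eq_one 𝔸 a b c h]
  push Not at h
  obtain ⟨k, hk⟩ := h
  by_cases ha : (k : 𝕂) = -a
  · rw [← neg_neg a, ← ha, ordinaryHypergeometric_radius_top_of_neg_nat₁]; simp
  by_cases hb : (k : 𝕂) = -b
  · rw [← neg_neg b, ← hb, ordinaryHypergeometric_radius_top_of_neg_nat₂]; simp
  rw [← neg_neg c, ← hk ha hb, ordinaryHypergeometric_radius_top_of_neg_nat₃]; simp

theorem analyticAt_ordinaryHypergeometric_zero {𝕂 𝔸 : Type*} [RCLike 𝕂]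
    [NormedDivisionRing 𝔸] [NormedAlgebra 𝕂 𝔸] [CompleteSpace 𝔸] (a b c : 𝕂) :
    AnalyticAt 𝕂 (ordinaryHypergeometric (𝔸 := 𝔸) a b c) 0 :=
  ((ordinaryHypergeometricSeries 𝔸 a b c).hasFPowerSeriesOnBall
    (ordinaryHypergeometricSeries_radius_pos 𝔸 a b c)).analyticAt

-- Where `(c)_k = 0`, both sides have the junk term `0` (from `x / 0 = 0`, resp. `0⁻¹ = 0`).
theorem hyp_eq_ordinaryHypergeometric (a b c z : ℂ) : hyp a b c z = ₂F₁ a b c z := by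
  rw [hyp, ordinaryHypergeometric_eq_tsum]
  congr! 2 with k
  simp only [smul_eq_mul]
  field_simp

theorem tendsto_hyp_of_tendsto_zero {α : Type*} {l : Filter α} {f : α → ℂ}
    (hf : Tendsto f l (𝓝 0)) (a b c : ℂ) : Tendsto (fun t ↦ hyp a b c (f t)) l (𝓝 1) := by
  simp only [hyp_eq_ordinaryHypergeometric]
  have h := (analyticAt_ordinaryHypergeometric_zero (𝔸 := ℂ) a b c).continuousAt.tendsto.comp hf
  rwa [ordinaryHypergeometric_zero] at h

theorem tendsto_sinh_atTop : Tendsto sinh atTop atTop :=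
  tendsto_atTop_mono' atTop ((eventually_ge_atTop 0).mono fun _ hx ↦ self_le_sinh_iff.mpr hx)
    tendsto_id

theorem tendsto_exp_neg_mul_sinh_atTop : Tendsto (fun t ↦ exp (-t) * sinh t) atTop (𝓝 (1 / 2)) := by
  have h : Tendsto (fun t ↦ (1 - exp (-t) ^ 2) / 2) atTop (𝓝 (1 / 2)) := by
    simpa using ((tendsto_exp_neg_atTop_nhds_zero.pow 2).const_sub 1).div_const 2
  refine h.congr fun t ↦ ?_
  rw [sinh_eq, exp_neg]
  field_simp

theorem tendsto_exp_neg_mul_cosh_atTop : Tendsto (fun t ↦ exp (-t) * cosh t) atTop (𝓝 (1 / 2)) := by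
  have h : Tendsto (fun t ↦ (1 + exp (-t) ^ 2) / 2) atTop (𝓝 (1 / 2)) := by
    simpa using ((tendsto_exp_neg_atTop_nhds_zero.pow 2).const_add 1).div_const 2
  refine h.congr fun t ↦ ?_
  rw [cosh_eq, exp_neg]
  field_simp

theorem ofReal_cpow_eq_exp_log {r : ℝ} (hr : 0 < r) (u : ℂ) :
    (r : ℂ) ^ u = Complex.exp (Real.log r * u) := by
  rw [Complex.cpow_def_of_ne_zero (Complex.ofReal_ne_zero.mpr hr.ne'), Complex.ofReal_log hr.le]

theorem exp_mul_eta2_eq {a b c μ σ w : ℂ} (hb : b = -(σ - μ) / 4 - Complex.I * w) {x : ℝ}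
    (hx : 0 < x) :
    Complex.exp (-(Complex.I * w) * x) * eta2 a b c μ σ x =
      ((exp (-(x / 2)) * sinh (x / 2) : ℝ) : ℂ) ^ ((σ - 1) / 2 + 2 * Complex.I * w) *
        ((exp (-(x / 2)) * cosh (x / 2) : ℝ) : ℂ) ^ (-((σ - 1) / 2)) *
        hyp b (b - c + 1) (b - a + 1) (-(((sinh (x / 2))⁻¹ ^ 2 : ℝ) : ℂ)) := by
  have hs : 0 < sinh (x / 2) := sinh_pos_iff.mpr (by linarith)
  have hc : 0 < cosh (x / 2) := cosh_pos _
  rw [eta2, ofReal_cpow_eq_exp_log hs, ofReal_cpow_eq_exp_log hc, ofReal_cpow_eq_exp_log hs,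
    ofReal_cpow_eq_exp_log (by positivity), ofReal_cpow_eq_exp_log (by positivity),
    Real.log_mul (exp_pos _).ne' hs.ne', Real.log_mul (exp_pos _).ne' hc.ne', Real.log_exp]
  simp only [← mul_assoc, ← Complex.exp_add]
  congr 2
  push_cast
  rw [hb]
  ring

theorem stmt19_general (μ σ : ℂ) (w : ℂ)
    (a b c : ℂ)
    (hb : b = -(σ - μ) / 4 - Complex.I * w) :
    Filter.Tendsto (fun x : ℝ => Complex.exp (-(Complex.I * w) * (x : ℂ)) * eta2 a b c μ σ x)
      Filter.atTop (nhds ((2 : ℂ) ^ (-(2 * Complex.I * w)))) := by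
  have half_atTop : Tendsto (fun x : ℝ ↦ x / 2) atTop atTop := tendsto_id.atTop_div_const two_pos
  have half_mem : ((1 / 2 : ℝ) : ℂ) ∈ Complex.slitPlane := by
    rw [Complex.ofReal_mem_slitPlane]; norm_num
  have hS := (tendsto_exp_neg_mul_sinh_atTop.comp half_atTop).ofReal.cpow
    (tendsto_const_nhds (x := (σ - 1) / 2 + 2 * Complex.I * w)) half_mem
  have hC := (tendsto_exp_neg_mul_cosh_atTop.comp half_atTop).ofReal.cpow
    (tendsto_const_nhds (x := -((σ - 1) / 2))) half_mem
  have hz : Tendsto (fun x : ℝ ↦ -(((sinh (x / 2))⁻¹ ^ 2 : ℝ) : ℂ)) atTop (𝓝 0) := by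
    simpa using
      ((tendsto_inv_atTop_zero.comp (tendsto_sinh_atTop.comp half_atTop)).pow 2).ofReal.neg
  have hval : (2 : ℂ) ^ (-(2 * Complex.I * w)) =
      ((1 / 2 : ℝ) : ℂ) ^ ((σ - 1) / 2 + 2 * Complex.I * w) *
        ((1 / 2 : ℝ) : ℂ) ^ (-((σ - 1) / 2)) * 1 := by
    rw [mul_one, ← Complex.cpow_add _ _ (by norm_num), add_neg_cancel_comm, one_div,
      Complex.ofReal_inv, Complex.inv_cpow _ _ (by simpa using pi_pos.ne), ← Complex.cpow_neg,
      Complex.ofReal_ofNat]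
  rw [hval]
  have hF := tendsto_hyp_of_tendsto_zero hz b (b - c + 1) (b - a + 1)
  refine ((hS.mul hC).mul hF).congr' ?_
  filter_upwards [eventually_gt_atTop 0] with x hx
  exact (exp_mul_eta2_eq hb hx).symm

/-- `e^{−iwx} η₂(x) → 2^{−2iw}` as `x → ∞`. -/
theorem stmt19 (μ σ lam : ℂ) (w : ℂ) (hw : w ^ 2 = lam)
    (hns : ∀ k : ℕ, (1 : ℂ) - 2 * Complex.I * w ≠ -(k : ℂ))
    (a b c : ℂ) (ha : a = -(σ - μ) / 4 + Complex.I * w)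
    (hb : b = -(σ - μ) / 4 - Complex.I * w) (hc' : c = μ / 2) :
    Filter.Tendsto (fun x : ℝ => Complex.exp (-(Complex.I * w) * (x : ℂ)) * eta2 a b c μ σ x)
      Filter.atTop (nhds ((2 : ℂ) ^ (-(2 * Complex.I * w)))) :=
  stmt19_general μ σ w a b c hb
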